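/- arXiv:2602.12191 — 3 statements merged into one kernel-verified Lean document; each statement's English description precedes it below -/
import Mathlib

section
/- Let G be a group with a finite generating set S. For every integer m ≥ 0 there exists an integer M ≥ 0 such that: for all x, y ∈ S generating a copy of ℤ² and every v ∈ G with |v y^j| > M for all j ∈ ℤ, it is not the case that both of the following hold: (a) there exist i ≥ 0 and j ∈ ℤ with |v x^i y^j| ≤ m, and (b) there exist i ≤ 0 and j ∈ ℤ with |v x^i y^j| ≤ m. (That is, if the line v·l_y avoids the ball St^M(∗), then at most one of the two half-planes v·P(x⁺,y) = {v x^i y^j : i ≥ 0} and v·P(x⁻,y) = {v x^i y^j : i ≤ 0} meets St^m(∗).) -/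
/-- The word length of `g` with respect to the generating set `S`: the least `n` such that
`g` is a product of `n` elements of `S ∪ S⁻¹` (so the word length of `1` is `0`). -/
noncomputable def wordLength {G : Type*} [Group G] (S : Set G) (g : G) : ℕ :=
  sInf {n : ℕ | ∃ l : List G, l.length = n ∧ (∀ x ∈ l, x ∈ S ∪ S⁻¹) ∧ l.prod = g}

/-- `x` and `y` generate a copy of `ℤ²`: they commute and the homomorphism `ℤ² → G`
sending `(i, j)` to `x^i * y^j` is injective. -/
def GeneratesZsq {G : Type*} [Group G] (x y : G) : Prop :=
  Commute x y ∧ Function.Injective (fun p : ℤ × ℤ => x ^ p.1 * y ^ p.2)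

section Aux

variable {G : Type*} [Group G] {S : Set G}

lemma wl_exists_list (hSgen : Subgroup.closure S = ⊤) (g : G) :
    ∃ l : List G, (∀ x ∈ l, x ∈ S ∪ S⁻¹) ∧ l.prod = g := by
  have hg : g ∈ Submonoid.closure (S ∪ S⁻¹) := by
    rw [← Subgroup.closure_toSubmonoid, hSgen]; trivial
  exact Submonoid.exists_list_of_mem_closure hg

lemma wl_le_of_list {l : List G} (h : ∀ x ∈ l, x ∈ S ∪ S⁻¹) :
    wordLength S l.prod ≤ l.length :=
  Nat.sInf_le ⟨l, rfl, h, rfl⟩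

lemma wl_spec (hSgen : Subgroup.closure S = ⊤) (g : G) :
    ∃ l : List G, l.length = wordLength S g ∧ (∀ x ∈ l, x ∈ S ∪ S⁻¹) ∧ l.prod = g := by
  have hne : {n : ℕ | ∃ l : List G, l.length = n ∧ (∀ x ∈ l, x ∈ S ∪ S⁻¹) ∧ l.prod = g}.Nonempty := by
    obtain ⟨l, h1, h2⟩ := wl_exists_list hSgen g
    exact ⟨l.length, l, rfl, h1, h2⟩
  exact Nat.sInf_mem hne

lemma wl_mul_le (hSgen : Subgroup.closure S = ⊤) (a b : G) :
    wordLength S (a * b) ≤ wordLength S a + wordLength S b := by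
  obtain ⟨la, hla, ha1, ha2⟩ := wl_spec hSgen a
  obtain ⟨lb, hlb, hb1, hb2⟩ := wl_spec hSgen b
  have := wl_le_of_list (l := la ++ lb) (by
    intro x hx; rcases List.mem_append.1 hx with h | h; exacts [ha1 x h, hb1 x h])
  simpa [ha2, hb2, hla, hlb] using this

lemma wl_inv_le (hSgen : Subgroup.closure S = ⊤) (g : G) :
    wordLength S g⁻¹ ≤ wordLength S g := by
  obtain ⟨l, hl, h1, h2⟩ := wl_spec hSgen g
  have hmem : ∀ x ∈ (l.map Inv.inv).reverse, x ∈ S ∪ S⁻¹ := by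
    intro x hx
    rw [List.mem_reverse, List.mem_map] at hx
    obtain ⟨y, hy, rfl⟩ := hx
    rcases h1 y hy with h | h
    · exact Or.inr (by simpa using h)
    · exact Or.inl (by simpa using h)
  have := wl_le_of_list hmem
  rw [← List.prod_inv_reverse, h2] at this
  simpa [hl] using this

lemma wl_zpow_le {x : G} (hx : x ∈ S) (k : ℤ) :
    wordLength S (x ^ k) ≤ k.natAbs := by
  rcases Int.natAbs_eq k with h | h
  · have : x ^ k = (List.replicate k.natAbs x).prod := by
      rw [List.prod_replicate, ← zpow_natCast, ← h]
    rw [this]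
    have := wl_le_of_list (l := List.replicate k.natAbs x) (by
      intro a ha; rw [List.eq_of_mem_replicate ha]; exact Or.inl hx)
    simpa using this
  · have : x ^ k = (List.replicate k.natAbs x⁻¹).prod := by
      rw [List.prod_replicate, inv_pow, ← zpow_natCast, ← zpow_neg, ← h]
    rw [this]
    have := wl_le_of_list (l := List.replicate k.natAbs x⁻¹) (by
      intro a ha; rw [List.eq_of_mem_replicate ha]; exact Or.inr (by simpa using hx))
    simpa using this

lemma wl_ball_finite (hSfin : S.Finite) (hSgen : Subgroup.closure S = ⊤) (n : ℕ) :
    {g : G | wordLength S g ≤ n}.Finite := by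
  have hT : (S ∪ S⁻¹).Finite := hSfin.union hSfin.inv
  have : Finite ↥(S ∪ S⁻¹) := hT.to_subtype
  have hlists : {l : List ↥(S ∪ S⁻¹) | l.length ≤ n}.Finite := List.finite_length_le _ n
  have himg : ((fun l : List ↥(S ∪ S⁻¹) => (l.map Subtype.val).prod) '' {l | l.length ≤ n}).Finite :=
    hlists.image _
  apply himg.subset
  intro g hg
  simp only [Set.mem_setOf_eq] at hg
  obtain ⟨l, hl, h1, h2⟩ := wl_spec hSgen g
  refine ⟨l.attach.map (fun x => ⟨x.1, h1 x.1 x.2⟩), ?_, ?_⟩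
  · simpa [hl] using hg
  · simp only [List.map_map]
    have : (l.attach.map fun x => ((fun x => (⟨x.1, h1 x.1 x.2⟩ : ↥(S ∪ S⁻¹))) x).val) = l := by
      simp
    rw [Function.comp_def, this, h2]

end Aux

/-- Lemma 3.1: if the line `v·l_y` avoids the ball of radius `M` about the identity, then at
most one of the two half-planes `v·P(x⁺,y)` and `v·P(x⁻,y)` meets the ball of radius `m`. -/
theorem wordLength_halfPlanes {G : Type*} [Group G] (S : Set G) (hSfin : S.Finite)
    (hSgen : Subgroup.closure S = ⊤) :
    ∀ m : ℕ, ∃ M : ℕ,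
      ∀ x ∈ S, ∀ y ∈ S, GeneratesZsq x y →
        ∀ v : G, (∀ j : ℤ, M < wordLength S (v * y ^ j)) →
          ¬ ((∃ i : ℤ, 0 ≤ i ∧ ∃ j : ℤ, wordLength S (v * x ^ i * y ^ j) ≤ m) ∧
             (∃ i : ℤ, i ≤ 0 ∧ ∃ j : ℤ, wordLength S (v * x ^ i * y ^ j) ≤ m)) := by
  classical
  intro m
  -- the set of possible x-displacements between two ball points in a common ℤ²-coset
  set B : Set ℤ := {a : ℤ | ∃ x ∈ S, ∃ y ∈ S, GeneratesZsq x y ∧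
      ∃ b : ℤ, wordLength S (x ^ a * y ^ b) ≤ 2 * m} with hB
  have hBfin : B.Finite := by
    have hball : {g : G | wordLength S g ≤ 2 * m}.Finite := wl_ball_finite hSfin hSgen (2 * m)
    have : B ⊆ ⋃ p ∈ S ×ˢ S, {a : ℤ | GeneratesZsq p.1 p.2 ∧
        ∃ b : ℤ, wordLength S (p.1 ^ a * p.2 ^ b) ≤ 2 * m} := by
      rintro a ⟨x, hx, y, hy, hxy, b, hb⟩
      exact Set.mem_biUnion (Set.mk_mem_prod hx hy) ⟨hxy, b, hb⟩
    refine Set.Finite.subset (Set.Finite.biUnion (hSfin.prod hSfin) ?_) this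
    rintro ⟨x, y⟩ -
    by_cases hxy : GeneratesZsq x y
    · have hP : {q : ℤ × ℤ | wordLength S (x ^ q.1 * y ^ q.2) ≤ 2 * m}.Finite := by
        apply Set.Finite.of_finite_image (f := fun q : ℤ × ℤ => x ^ q.1 * y ^ q.2)
        · exact hball.subset (by rintro g ⟨q, hq, rfl⟩; exact hq)
        · exact hxy.2.injOn
      apply (hP.image Prod.fst).subset
      rintro a ⟨-, b, hb⟩
      exact ⟨(a, b), hb, rfl⟩
    · simp only [hxy]
      simp
  set N : ℕ := hBfin.toFinset.sup Int.natAbs with hN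
  refine ⟨m + N, ?_⟩
  rintro x hx y hy hxy v hv ⟨⟨i₁, hi₁, j₁, h₁⟩, ⟨i₂, hi₂, j₂, h₂⟩⟩
  have hc : Commute x y := hxy.1
  -- the displacement identity
  have key : x ^ (i₁ - i₂) * y ^ (j₁ - j₂) = (v * x ^ i₂ * y ^ j₂)⁻¹ * (v * x ^ i₁ * y ^ j₁) := by
    have hstep : (v * x ^ i₂ * y ^ j₂)⁻¹ * (v * x ^ i₁ * y ^ j₁)
        = y ^ (-j₂) * (x ^ (i₁ - i₂) * y ^ j₁) := by
      group
    rw [hstep, ← mul_assoc, ← (hc.zpow_zpow (i₁ - i₂) (-j₂)).eq, mul_assoc, ← zpow_add, neg_add_eq_sub]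
  have hw : wordLength S (x ^ (i₁ - i₂) * y ^ (j₁ - j₂)) ≤ 2 * m := by
    rw [key]
    calc wordLength S ((v * x ^ i₂ * y ^ j₂)⁻¹ * (v * x ^ i₁ * y ^ j₁))
        ≤ wordLength S (v * x ^ i₂ * y ^ j₂)⁻¹ + wordLength S (v * x ^ i₁ * y ^ j₁) :=
          wl_mul_le hSgen _ _
      _ ≤ m + m := add_le_add ((wl_inv_le hSgen _).trans h₂) h₁
      _ = 2 * m := by ring
  have haB : (i₁ - i₂) ∈ B := ⟨x, hx, y, hy, hxy, j₁ - j₂, hw⟩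
  have haN : (i₁ - i₂).natAbs ≤ N := Finset.le_sup (hBfin.mem_toFinset.mpr haB)
  have hiN : i₁.natAbs ≤ N := le_trans (by omega) haN
  -- bound the point on the line
  have id2 : v * y ^ j₁ = (v * x ^ i₁ * y ^ j₁) * x ^ (-i₁) := by
    have : (v * x ^ i₁ * y ^ j₁) * x ^ (-i₁) = v * x ^ i₁ * (x ^ (-i₁) * y ^ j₁) := by
      rw [mul_assoc, ← (hc.zpow_zpow (-i₁) j₁).eq]
    rw [this]; group
  have hbound : wordLength S (v * y ^ j₁) ≤ m + N := by
    rw [id2]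
    calc wordLength S ((v * x ^ i₁ * y ^ j₁) * x ^ (-i₁))
        ≤ wordLength S (v * x ^ i₁ * y ^ j₁) + wordLength S (x ^ (-i₁)) := wl_mul_le hSgen _ _
      _ ≤ m + N := add_le_add h₁ ((wl_zpow_le hx (-i₁)).trans (by simpa using hiN))
  exact absurd (hv j₁) (not_lt.mpr hbound)
end

section
/- Let G be a group with a finite generating set S. For every integer m ≥ 0 there exists an integer M ≥ 0 such that: for all x, y ∈ S generating a copy of ℤ² and every v ∈ G with |v| > M, if there exists n ≥ 0 with |v y^n| ≤ m, then |v y^i x^j| > m for all integers i ≤ 0 and all j ∈ ℤ. In particular, under these hypotheses |v x^j y^i| > m for all i ≤ 0 and j ∈ ℤ, so |v y^{-n}| > m for all n ≥ 0. -/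
namespace WLAux

variable {G : Type*} [Group G] {S : Set G}

lemma wordLength_le {g : G} {l : List G} (hmem : ∀ x ∈ l, x ∈ S ∪ S⁻¹)
    (hprod : l.prod = g) : wordLength S g ≤ l.length :=
  Nat.sInf_le ⟨l, rfl, hmem, hprod⟩

lemma exists_word (hSgen : Subgroup.closure S = ⊤) (g : G) :
    ∃ l : List G, l.length = wordLength S g ∧ (∀ x ∈ l, x ∈ S ∪ S⁻¹) ∧ l.prod = g := by
  have hg : g ∈ Submonoid.closure (S ∪ S⁻¹) := by
    rw [← Subgroup.closure_toSubmonoid, hSgen]; trivial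
  obtain ⟨l, hl, hprod⟩ := Submonoid.exists_list_of_mem_closure hg
  have hne : {n : ℕ | ∃ l : List G, l.length = n ∧ (∀ x ∈ l, x ∈ S ∪ S⁻¹) ∧
      l.prod = g}.Nonempty := ⟨l.length, l, rfl, hl, hprod⟩
  exact Nat.sInf_mem hne

lemma wordLength_mul_le (hSgen : Subgroup.closure S = ⊤) (g h : G) :
    wordLength S (g * h) ≤ wordLength S g + wordLength S h := by
  obtain ⟨l1, hl1, hm1, hp1⟩ := exists_word hSgen g
  obtain ⟨l2, hl2, hm2, hp2⟩ := exists_word hSgen h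
  calc wordLength S (g * h) ≤ (l1 ++ l2).length := by
        refine wordLength_le (fun x hx => ?_) (by simp [hp1, hp2])
        rcases List.mem_append.mp hx with h' | h'
        · exact hm1 x h'
        · exact hm2 x h'
    _ = wordLength S g + wordLength S h := by simp [hl1, hl2]

lemma wordLength_inv_le (hSgen : Subgroup.closure S = ⊤) (g : G) :
    wordLength S g⁻¹ ≤ wordLength S g := by
  obtain ⟨l, hl, hm, hp⟩ := exists_word hSgen g
  calc wordLength S g⁻¹ ≤ (l.reverse.map (·⁻¹)).length := by
        refine wordLength_le (fun x hx => ?_) ?_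
        · simp only [List.mem_map, List.mem_reverse] at hx
          obtain ⟨a, ha, rfl⟩ := hx
          rcases hm a ha with h' | h'
          · exact Or.inr (by simpa using h')
          · exact Or.inl (by simpa using h')
        · rw [← hp, List.prod_inv_reverse, List.map_reverse]
    _ = wordLength S g := by simp [hl]

lemma wordLength_zpow_le (hSgen : Subgroup.closure S = ⊤) {y : G} (hy : y ∈ S) (k : ℤ) :
    wordLength S (y ^ k) ≤ k.natAbs := by
  rcases le_or_gt 0 k with h | h
  · calc wordLength S (y ^ k) ≤ (List.replicate k.natAbs y).length :=
          wordLength_le (fun x hx => by rw [List.eq_of_mem_replicate hx]; exact Or.inl hy)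
            (by rw [List.prod_replicate, ← zpow_natCast, Int.natAbs_of_nonneg h])
      _ = k.natAbs := by simp
  · calc wordLength S (y ^ k) ≤ (List.replicate k.natAbs y⁻¹).length := by
          refine wordLength_le (fun x hx => ?_) ?_
          · rw [List.eq_of_mem_replicate hx]
            exact Or.inr (by simpa using hy)
          · rw [List.prod_replicate, inv_pow, ← zpow_natCast, ← zpow_neg]
            congr 1; omega
      _ = k.natAbs := by simp

/-- Balls are finite. -/
lemma ball_finite (hSfin : S.Finite) (hSgen : Subgroup.closure S = ⊤) (k : ℕ) :
    {g : G | wordLength S g ≤ k}.Finite := by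
  have hT : (S ∪ S⁻¹).Finite := hSfin.union hSfin.inv
  have key : ∀ k : ℕ, {g : G | ∃ l : List G, l.length ≤ k ∧ (∀ x ∈ l, x ∈ S ∪ S⁻¹) ∧
      l.prod = g}.Finite := by
    intro k
    induction k with
    | zero =>
      refine Set.Finite.subset (Set.finite_singleton 1) ?_
      rintro g ⟨l, hl, -, hp⟩
      rw [Nat.le_zero, List.length_eq_zero_iff] at hl
      simp [Set.mem_singleton_iff, ← hp, hl]
    | succ k ih =>
      refine Set.Finite.subset ((Set.finite_singleton (1 : G)).union
        (hT.biUnion (fun t _ => ih.image (t * ·)))) ?_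
      rintro g ⟨l, hl, hm, hp⟩
      cases l with
      | nil => exact Or.inl (by simp [← hp])
      | cons a l' =>
        refine Or.inr (Set.mem_biUnion (hm a (by simp)) ?_)
        exact ⟨l'.prod, ⟨l', by simpa using hl, fun x hx => hm x (by simp [hx]), rfl⟩,
          by simp [← hp]⟩
  refine Set.Finite.subset (key k) ?_
  intro g hg
  simp only [Set.mem_setOf_eq] at hg
  obtain ⟨l, hl, hm, hp⟩ := exists_word hSgen g
  exact ⟨l, by omega, hm, hp⟩

end WLAux

open WLAux in
/-- Lemma 3.2: if `v` is far from the identity and the ray `v·r_y` meets the ball of radius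
`m` about the identity, then the half-plane `v·P(y⁻,x)` avoids that ball; in particular so do
the lines `v·y^i·l_x` for `i ≤ 0` and the ray `v·r_{y⁻¹}`. -/
theorem wordLength_halfPlane_of_ray {G : Type*} [Group G] (S : Set G) (hSfin : S.Finite)
    (hSgen : Subgroup.closure S = ⊤) :
    ∀ m : ℕ, ∃ M : ℕ,
      ∀ x ∈ S, ∀ y ∈ S, GeneratesZsq x y →
        ∀ v : G, M < wordLength S v →
          (∃ n : ℕ, wordLength S (v * y ^ (n : ℤ)) ≤ m) →
            (∀ i : ℤ, i ≤ 0 → ∀ j : ℤ, m < wordLength S (v * y ^ i * x ^ j)) ∧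
            (∀ i : ℤ, i ≤ 0 → ∀ j : ℤ, m < wordLength S (v * x ^ j * y ^ i)) ∧
            (∀ n : ℕ, m < wordLength S (v * y ^ (-(n : ℤ)))) := by
  intro m
  -- bound for a pair (x,y)
  set f : G → G → ℕ := fun x y =>
    sSup (Int.natAbs '' {b : ℤ | ∃ a : ℤ, wordLength S (x ^ a * y ^ b) ≤ 2 * m}) with hf
  have hfin : ∀ x y : G, GeneratesZsq x y →
      (Int.natAbs '' {b : ℤ | ∃ a : ℤ, wordLength S (x ^ a * y ^ b) ≤ 2 * m}).Finite := by
    intro x y hxy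
    refine Set.Finite.image _ ?_
    have : {b : ℤ | ∃ a : ℤ, wordLength S (x ^ a * y ^ b) ≤ 2 * m} ⊆
        Prod.snd '' ((fun p : ℤ × ℤ => x ^ p.1 * y ^ p.2) ⁻¹'
          {g : G | wordLength S g ≤ 2 * m}) := by
      rintro b ⟨a, ha⟩
      exact ⟨(a, b), ha, rfl⟩
    exact Set.Finite.subset
      (((ball_finite hSfin hSgen (2 * m)).preimage hxy.2.injOn).image _) this
  set F : ℕ := (hSfin.toFinset ×ˢ hSfin.toFinset).sup (fun p => f p.1 p.2) with hF
  refine ⟨m + F, ?_⟩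
  intro x hx y hy hxy v hv ⟨n, hn⟩
  have hmain : ∀ i : ℤ, i ≤ 0 → ∀ j : ℤ, m < wordLength S (v * y ^ i * x ^ j) := by
    intro i hi j
    by_contra hle
    push_neg at hle
    -- the difference element
    have hd : wordLength S (x ^ (-j) * y ^ ((n : ℤ) - i)) ≤ 2 * m := by
      have heq : x ^ (-j) * y ^ ((n : ℤ) - i) = (v * y ^ i * x ^ j)⁻¹ * (v * y ^ (n : ℤ)) := by
        group
      rw [heq]
      calc wordLength S ((v * y ^ i * x ^ j)⁻¹ * (v * y ^ (n : ℤ)))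
          ≤ wordLength S (v * y ^ i * x ^ j)⁻¹ + wordLength S (v * y ^ (n : ℤ)) :=
            wordLength_mul_le hSgen _ _
        _ ≤ wordLength S (v * y ^ i * x ^ j) + wordLength S (v * y ^ (n : ℤ)) := by
            have := wordLength_inv_le hSgen (v * y ^ i * x ^ j); omega
        _ ≤ 2 * m := by omega
    -- so (n - i).natAbs ≤ f x y ≤ F
    have hmem : ((n : ℤ) - i).natAbs ∈
        Int.natAbs '' {b : ℤ | ∃ a : ℤ, wordLength S (x ^ a * y ^ b) ≤ 2 * m} :=
      ⟨(n : ℤ) - i, ⟨-j, hd⟩, rfl⟩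
    have h1 : ((n : ℤ) - i).natAbs ≤ f x y :=
      le_csSup (hfin x y hxy).bddAbove hmem
    have h2 : f x y ≤ F := by
      refine Finset.le_sup (f := fun p : G × G => f p.1 p.2) (b := (x, y)) ?_
      simp [Finset.mem_product, hSfin.mem_toFinset, hx, hy]
    -- but n > F
    have h3 : wordLength S v ≤ m + n := by
      have heq : v = (v * y ^ (n : ℤ)) * y ^ (-(n : ℤ)) := by group
      calc wordLength S v = wordLength S ((v * y ^ (n : ℤ)) * y ^ (-(n : ℤ))) := by rw [← heq]
        _ ≤ wordLength S (v * y ^ (n : ℤ)) + wordLength S (y ^ (-(n : ℤ))) :=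
            wordLength_mul_le hSgen _ _
        _ ≤ m + n := by
            have := wordLength_zpow_le hSgen hy (-(n : ℤ))
            simp only [Int.natAbs_neg, Int.natAbs_natCast] at this
            omega
    omega
  refine ⟨hmain, ?_, ?_⟩
  · intro i hi j
    have hc : x ^ j * y ^ i = y ^ i * x ^ j := (hxy.1.zpow_zpow j i).eq
    rw [mul_assoc, hc, ← mul_assoc]
    exact hmain i hi j
  · intro n'
    have := hmain (-(n' : ℤ)) (by omega) 0
    simpa using this
end

section
/- Let G be a group with a finite presentation ⟨S : R⟩ satisfying the hypotheses of the Main Theorem, and suppose in addition that every generator s ∈ S occurs in some relation r ∈ R. Then G is one-ended; precisely, the Cayley graph Cay(G, S̄) of G with respect to the (finite) image S̄ of S in G has exactly one end, i.e. its end space is nonempty and has exactly one element. -/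
/-!
Let `T ≅ ℤ^p` be spanned by the `tᵢ`, fix a finite `K ⊆ G`, and let `B ⊇ K` be the finite set of
points from which a step along a `tᵢ` or a generator may meet `K`. A coset `xT` meets `B` in
finitely many points, so for large `n` all the points `x tₐⁿ` are joined outside `K` within the
quadrants of `xT` spanned by two of the `tᵢ`. A generator `s` commutes with some `tₐ`, so right
multiplication by `s` joins `x tₐⁿ` to `x s tₐⁿ`; as the generators generate `G`, the far parts
of all cosets lie in one component of the complement of `K`. Every `g` outside a finite set
reaches them: of the `|B| + 1` parallel rays `g t_bᵈ tₐⁱ` (`d ≤ |B|`, `i ≥ 0`) one misses `B`.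
-/

/-- The generator `s` occurs in the relation `r` if `s` or `s⁻¹` appears as a letter of the
reduced word `r`. -/
def OccursIn {α : Type*} [DecidableEq α] (s : α) (r : FreeGroup α) : Prop :=
  ∃ b : Bool, (s, b) ∈ r.toWord

/-- The finite presentation `⟨α : rels⟩` satisfies the hypotheses of the Main Theorem: there
are pairwise commuting elements `t 0, …, t (p-1)` with `p ≥ 3` generating a copy of `ℤ^p`,
such that (1) for every relation `r` some `t i₀` commutes with the image of every generator
occurring in `r`, and (2) for every generator `s` occurring in `r` some `t i ≠ t i₀` commutes
with the image of `s`. -/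
def SatisfiesMainHyp {α : Type*} [DecidableEq α] (rels : Set (FreeGroup α)) : Prop :=
  ∃ p : ℕ, 3 ≤ p ∧ ∃ t : Fin p → PresentedGroup rels,
    (∀ i j, Commute (t i) (t j)) ∧
    Function.Injective (fun n : Fin p → ℤ => (List.ofFn fun i => t i ^ n i).prod) ∧
    ∀ r ∈ rels, ∃ i₀ : Fin p,
      (∀ s : α, OccursIn s r → Commute (t i₀) (PresentedGroup.of s)) ∧
      (∀ s : α, OccursIn s r →
        ∃ i : Fin p, t i ≠ t i₀ ∧ Commute (t i) (PresentedGroup.of s))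

/-- The Cayley graph of a group `G` with respect to a generating set `S`: distinct vertices
`v, w` are adjacent iff `v⁻¹ * w ∈ S ∪ S⁻¹`. -/
def cayleyGraph {G : Type*} [Group G] (S : Set G) : SimpleGraph G where
  Adj v w := v ≠ w ∧ v⁻¹ * w ∈ S ∪ S⁻¹
  symm := ⟨by
    rintro v w ⟨hne, h⟩
    refine ⟨hne.symm, ?_⟩
    have hw : w⁻¹ * v = (v⁻¹ * w)⁻¹ := by group
    rw [hw]
    rcases h with h | h
    · exact Or.inr (by simpa [Set.mem_inv] using h)
    · exact Or.inl (Set.mem_inv.mp h)⟩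
  loopless := ⟨fun v h => h.1 rfl⟩


open Function Filter

namespace SimpleGraph

variable {V : Type*} (Γ : SimpleGraph V)

def ReachableOutside (K : Set V) (x y : V) : Prop :=
  ∃ (hx : x ∉ K) (hy : y ∉ K), (Γ.induce Kᶜ).Reachable ⟨x, hx⟩ ⟨y, hy⟩

namespace ReachableOutside

variable {Γ} {K : Set V} {x y z : V}

lemma refl (hx : x ∉ K) : Γ.ReachableOutside K x x := ⟨hx, hx, .rfl⟩

lemma symm (h : Γ.ReachableOutside K x y) : Γ.ReachableOutside K y x :=
  let ⟨hx, hy, h⟩ := h; ⟨hy, hx, h.symm⟩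

lemma trans (h : Γ.ReachableOutside K x y) (h' : Γ.ReachableOutside K y z) :
    Γ.ReachableOutside K x z :=
  let ⟨hx, _, h⟩ := h; let ⟨_, hz, h'⟩ := h'; ⟨hx, hz, h.trans h'⟩

lemma of_adj (hxy : Γ.Adj x y) (hx : x ∉ K) (hy : y ∉ K) : Γ.ReachableOutside K x y :=
  ⟨hx, hy, Adj.reachable (by simpa using hxy)⟩

end ReachableOutside

-- `SimpleGraph.nonempty_ends_of_infinite` is only stated for `V : Type`.
lemma end_nonempty [Γ.LocallyFinite] [Fact Γ.Preconnected] [Infinite V] : Γ.end.Nonempty := by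
  have (K : (Finset V)ᵒᵖ) : Finite (Γ.componentComplFunctor.obj K) :=
    Γ.componentCompl_finite K.unop
  have (K : (Finset V)ᵒᵖ) : Nonempty (Γ.componentComplFunctor.obj K) :=
    Γ.componentCompl_nonempty_of_infinite K.unop
  exact nonempty_sections_of_finite_inverse_system _

theorem end_subsingleton_of_reachableOutside
    (h : ∀ K : Finset V, ∃ L : Set V, L.Finite ∧ ∀ x ∉ L, ∀ y ∉ L, Γ.ReachableOutside K x y) :
    Γ.end.Subsingleton := by
  classical
  intro e he e' he'
  funext K
  obtain ⟨L, hL, hKL⟩ := h K.unop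
  let L' : Finset V := K.unop ∪ hL.toFinset
  have hsub : K.unop ⊆ L' := Finset.subset_union_left
  have hL' {x : V} (hx : x ∉ (L' : Set V)) : x ∉ L := fun h => hx (by simp [L', h])
  obtain ⟨x, hx, hex⟩ := (e (.op L')).exists_eq_mk
  obtain ⟨y, hy, hey⟩ := (e' (.op L')).exists_eq_mk
  rw [end_hom_mk_of_mk Γ he (CategoryTheory.opHomOfLE hsub) hx hex.symm,
    end_hom_mk_of_mk Γ he' (CategoryTheory.opHomOfLE hsub) hy hey.symm]
  obtain ⟨_, _, hxy⟩ := hKL x (hL' hx) y (hL' hy)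
  exact ConnectedComponent.sound hxy

end SimpleGraph

open SimpleGraph

section Cayley

variable {G : Type*} [Group G] {S : Set G}

lemma cayleyGraph_reachableOutside_mul {K : Set G} {y s : G} (hs : s ∈ S) (hy : y ∉ K)
    (hys : y * s ∉ K) : (cayleyGraph S).ReachableOutside K y (y * s) := by
  by_cases h : y = y * s
  · rw [← h]
    exact .refl hy
  · exact .of_adj ⟨h, by simp [hs]⟩ hy hys

lemma cayleyGraph_exists_finite_reachableOutside_mul (hS : Subgroup.closure S = ⊤) (g : G) :
    ∃ F : Set G, F.Finite ∧ ∀ (K : Set G) (y : G), (∀ f ∈ F, y * f ∉ K) →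
      (cayleyGraph S).ReachableOutside K y (y * g) := by
  have hg : g ∈ Subgroup.closure S := hS ▸ Subgroup.mem_top g
  induction hg using Subgroup.closure_induction with
  | mem s hs =>
    refine ⟨{1, s}, Set.toFinite _, fun K y hy => ?_⟩
    exact cayleyGraph_reachableOutside_mul hs (by simpa using hy 1 (by simp)) (hy s (by simp))
  | one =>
    refine ⟨{1}, Set.finite_singleton 1, fun K y hy => ?_⟩
    simpa using ReachableOutside.refl (by simpa using hy 1 rfl)
  | mul g h _ _ ihg ihh =>
    obtain ⟨F, hF, hg⟩ := ihg
    obtain ⟨F', hF', hh⟩ := ihh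
    refine ⟨F ∪ (g * ·) '' F', hF.union (hF'.image _), fun K y hy => ?_⟩
    rw [← mul_assoc]
    refine (hg K y fun f hf => hy f (.inl hf)).trans (hh K (y * g) fun f hf => ?_)
    simpa [mul_assoc] using hy (g * f) (.inr ⟨f, hf, rfl⟩)
  | inv g _ ih =>
    obtain ⟨F, hF, hg⟩ := ih
    refine ⟨(g⁻¹ * ·) '' F, hF.image _, fun K y hy => ?_⟩
    simpa using (hg K (y * g⁻¹) fun f hf => by simpa [mul_assoc] using hy _ ⟨f, hf, rfl⟩).symm

lemma cayleyGraph_exists_finite_forall_reachableOutside_mul (hS : Subgroup.closure S = ⊤)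
    {E K : Set G} (hE : E.Finite) (hK : K.Finite) :
    ∃ B : Set G, B.Finite ∧ K ⊆ B ∧
      ∀ y ∉ B, ∀ g ∈ E, (cayleyGraph S).ReachableOutside K y (y * g) := by
  choose F hF hFK using cayleyGraph_exists_finite_reachableOutside_mul hS
  refine ⟨K ∪ ⋃ g ∈ E, ⋃ f ∈ F g, (· * f) ⁻¹' K,
    hK.union (hE.biUnion fun g _ => (hF g).biUnion fun f _ =>
      hK.preimage (mul_left_injective f).injOn),
    Set.subset_union_left, fun y hy g hg => hFK g K y fun f hf hyf => hy ?_⟩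
  exact .inr (Set.mem_biUnion hg (Set.mem_biUnion hf hyf))

lemma cayleyGraph_preconnected (hS : Subgroup.closure S = ⊤) : (cayleyGraph S).Preconnected :=
  fun x y => by
    obtain ⟨F, -, hF⟩ := cayleyGraph_exists_finite_reachableOutside_mul hS (x⁻¹ * y)
    obtain ⟨_, _, h⟩ := hF ∅ x fun _ _ => Set.notMem_empty _
    simpa using h.map (Embedding.induce _).toHom

lemma cayleyGraph_finite_neighborSet (hS : S.Finite) (v : G) :
    ((cayleyGraph S).neighborSet v).Finite :=
  ((hS.union hS.inv).image (v * ·)).subset fun w ⟨_, hw⟩ => ⟨v⁻¹ * w, hw, by simp⟩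

end Cayley

section Quadrant

variable {G : Type*} [Group G] {Γ : SimpleGraph G} {K B : Set G} {u v : G}

lemma reachableOutside_mul_pow (hKB : K ⊆ B) (hu : ∀ y ∉ B, Γ.ReachableOutside K y (y * u))
    {x : G} {n : ℕ} (hx : ∀ j ≤ n, x * u ^ j ∉ B) : Γ.ReachableOutside K x (x * u ^ n) := by
  induction n with
  | zero => simpa using ReachableOutside.refl fun h => hx 0 le_rfl (by simpa using hKB h)
  | succ n ih =>
    rw [pow_succ, ← mul_assoc]
    exact (ih fun j hj => hx j (hj.trans n.le_succ)).trans (hu _ (hx n n.le_succ))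

lemma eventually_forall_mul_pow_mul_pow_notMem (hB : B.Finite)
    (huv : Injective fun ij : ℕ × ℕ => u ^ ij.1 * v ^ ij.2) (x : G) :
    ∀ᶠ n in atTop, ∀ i, x * u ^ i * v ^ n ∉ B := by
  have hbad : {ij : ℕ × ℕ | x * u ^ ij.1 * v ^ ij.2 ∈ B}.Finite := by
    simp only [mul_assoc]
    exact hB.preimage ((mul_right_injective x).comp huv).injOn
  rw [← Nat.cofinite_eq_atTop, eventually_cofinite]
  refine (hbad.image Prod.snd).subset fun n hn => ?_
  obtain ⟨i, hi⟩ := not_forall_not.mp hn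
  exact ⟨(i, n), hi, rfl⟩

lemma eventually_reachableOutside_mul_pow_mul_pow (hKB : K ⊆ B) (hB : B.Finite)
    (huv : Injective fun ij : ℕ × ℕ => u ^ ij.1 * v ^ ij.2) (hcomm : Commute u v)
    (hu : ∀ y ∉ B, Γ.ReachableOutside K y (y * u)) (x : G) :
    ∀ᶠ n in atTop, ∀ d, Γ.ReachableOutside K (x * v ^ n) (x * u ^ d * v ^ n) := by
  filter_upwards [eventually_forall_mul_pow_mul_pow_notMem hB huv x] with n hn d
  have hswap (j : ℕ) : x * v ^ n * u ^ j = x * u ^ j * v ^ n := by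
    rw [mul_assoc, ← (hcomm.pow_pow j n).eq, ← mul_assoc]
  rw [← hswap]
  exact reachableOutside_mul_pow (x := x * v ^ n) hKB hu fun j _ => hswap j ▸ hn j

lemma exists_le_ncard_forall_mul_pow_mul_pow_notMem (hB : B.Finite)
    (huv : Injective fun ij : ℕ × ℕ => u ^ ij.1 * v ^ ij.2) (x : G) :
    ∃ d ≤ B.ncard, ∀ i, x * u ^ d * v ^ i ∉ B := by
  by_contra! h
  choose! row hrow using h
  obtain ⟨d, -, d', -, hne, heq⟩ := Set.exists_ne_map_eq_of_ncard_lt_of_maps_to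
    (s := Set.Iic B.ncard) (f := fun d => x * u ^ d * v ^ row d) (by simp) hrow hB
  simp only [mul_assoc] at heq
  exact hne (congrArg Prod.fst (@huv (d, row d) (d', row d') (mul_left_cancel heq)))

lemma eventually_reachableOutside_mul_pow_of_forall_le (hKB : K ⊆ B) (hB : B.Finite)
    (huv : Injective fun ij : ℕ × ℕ => u ^ ij.1 * v ^ ij.2) (hcomm : Commute u v)
    (hu : ∀ y ∉ B, Γ.ReachableOutside K y (y * u)) (hv : ∀ y ∉ B, Γ.ReachableOutside K y (y * v))
    {x : G} (hx : ∀ j ≤ B.ncard, x * u ^ j ∉ B) :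
    ∀ᶠ n in atTop, Γ.ReachableOutside K x (x * v ^ n) := by
  obtain ⟨d, hd, hrow⟩ := exists_le_ncard_forall_mul_pow_mul_pow_notMem hB huv x
  filter_upwards [eventually_reachableOutside_mul_pow_mul_pow hKB hB huv hcomm hu x] with n hn
  have hclimb := reachableOutside_mul_pow hKB hu fun j hj => hx j (hj.trans hd)
  exact (hclimb.trans (reachableOutside_mul_pow hKB hv fun j _ => hrow j)).trans (hn d).symm

lemma eventually_reachableOutside_mul_mul_pow_of_commute (hB : B.Finite)
    (huv : Injective fun ij : ℕ × ℕ => u ^ ij.1 * v ^ ij.2) {s : G} (hs : Commute v s)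
    (hsB : ∀ y ∉ B, Γ.ReachableOutside K y (y * s)) (x : G) :
    ∀ᶠ n in atTop, Γ.ReachableOutside K (x * v ^ n) (x * s * v ^ n) := by
  filter_upwards [eventually_forall_mul_pow_mul_pow_notMem hB huv x] with n hn
  rw [mul_assoc x s, ← (hs.pow_left n).eq, ← mul_assoc]
  exact hsB _ (by simpa using hn 0)

end Quadrant

section Family

variable {G : Type*} [Group G] {Γ : SimpleGraph G} {K B : Set G}
  {ι : Type*} [Finite ι] [Nontrivial ι] {t : ι → G}

lemma eventually_forall_reachableOutside_mul_pow (hKB : K ⊆ B) (hB : B.Finite)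
    (ht : Pairwise fun a b => Injective fun ij : ℕ × ℕ => t a ^ ij.1 * t b ^ ij.2)
    (hcomm : ∀ a b, Commute (t a) (t b)) (htB : ∀ y ∉ B, ∀ a, Γ.ReachableOutside K y (y * t a))
    (x : G) : ∀ᶠ n in atTop, ∀ a b, Γ.ReachableOutside K (x * t a ^ n) (x * t b ^ n) := by
  simp only [eventually_all]
  intro a b
  rcases eq_or_ne a b with rfl | hab
  · obtain ⟨c, hca⟩ := exists_ne a
    filter_upwards [eventually_reachableOutside_mul_pow_mul_pow hKB hB (ht hca) (hcomm c a)
      (htB · · c) x] with n hn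
    simpa using hn 0
  · filter_upwards [eventually_reachableOutside_mul_pow_mul_pow hKB hB (ht hab.symm) (hcomm b a)
      (htB · · b) x, eventually_reachableOutside_mul_pow_mul_pow hKB hB (ht hab) (hcomm a b)
      (htB · · a) x] with n ha hb
    have hswap : x * t b ^ n * t a ^ n = x * t a ^ n * t b ^ n := by
      rw [mul_assoc, ((hcomm b a).pow_pow n n).eq, ← mul_assoc]
    exact (ha n).trans (hswap ▸ (hb n).symm)

lemma eventually_reachableOutside_mul_mul_pow {S : Set G} (hS : Subgroup.closure S = ⊤)
    (hKB : K ⊆ B) (hB : B.Finite)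
    (ht : Pairwise fun a b => Injective fun ij : ℕ × ℕ => t a ^ ij.1 * t b ^ ij.2)
    (hcomm : ∀ a b, Commute (t a) (t b)) (htB : ∀ y ∉ B, ∀ a, Γ.ReachableOutside K y (y * t a))
    (hSt : ∀ s ∈ S, ∃ a, Commute (t a) s) (hSB : ∀ y ∉ B, ∀ s ∈ S, Γ.ReachableOutside K y (y * s))
    (g x : G) : ∀ᶠ n in atTop, ∀ a b, Γ.ReachableOutside K (x * t a ^ n) (x * g * t b ^ n) := by
  have hg : g ∈ Subgroup.closure S := hS ▸ Subgroup.mem_top g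
  have hswitch := eventually_forall_reachableOutside_mul_pow hKB hB ht hcomm htB
  induction hg using Subgroup.closure_induction generalizing x with
  | mem s hs =>
    obtain ⟨c, hc⟩ := hSt s hs
    obtain ⟨c', hc'⟩ := exists_ne c
    filter_upwards [hswitch x, eventually_reachableOutside_mul_mul_pow_of_commute hB (ht hc') hc
      (hSB · · s hs) x, hswitch (x * s)] with n h₁ h₂ h₃ a b
    exact ((h₁ a c).trans h₂).trans (h₃ c b)
  | one => simpa using hswitch x
  | mul g h _ _ ihg ihh =>
    filter_upwards [ihg x, ihh (x * g)] with n h₁ h₂ a b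
    rw [← mul_assoc]
    exact (h₁ a a).trans (h₂ a b)
  | inv g _ ih =>
    filter_upwards [ih (x * g⁻¹)] with n h a b
    simpa using (h b a).symm

theorem exists_finite_forall_reachableOutside {S : Set G} (hS : Subgroup.closure S = ⊤)
    (hKB : K ⊆ B) (hB : B.Finite)
    (ht : Pairwise fun a b => Injective fun ij : ℕ × ℕ => t a ^ ij.1 * t b ^ ij.2)
    (hcomm : ∀ a b, Commute (t a) (t b)) (htB : ∀ y ∉ B, ∀ a, Γ.ReachableOutside K y (y * t a))
    (hSt : ∀ s ∈ S, ∃ a, Commute (t a) s) (hSB : ∀ y ∉ B, ∀ s ∈ S, Γ.ReachableOutside K y (y * s)) :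
    ∃ L : Set G, L.Finite ∧ ∀ g ∉ L, ∀ h ∉ L, Γ.ReachableOutside K g h := by
  obtain ⟨a, b, hab⟩ := exists_pair_ne ι
  refine ⟨⋃ j ∈ Set.Iic B.ncard, (· * t a ^ j) ⁻¹' B,
    (Set.finite_Iic _).biUnion fun j _ => hB.preimage (mul_left_injective _).injOn,
    fun g hg h hh => ?_⟩
  simp only [Set.mem_iUnion, Set.mem_preimage, Set.mem_Iic, not_exists] at hg hh
  have hescape {x : G} (hx : ∀ j ≤ B.ncard, x * t a ^ j ∉ B) :=
    eventually_reachableOutside_mul_pow_of_forall_le hKB hB (ht hab) (hcomm a b) (htB · · a)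
      (htB · · b) hx
  obtain ⟨n, ⟨hg, hh⟩, hgh⟩ := (((hescape hg).and (hescape hh)).and
    (eventually_reachableOutside_mul_mul_pow hS hKB hB ht hcomm htB hSt hSB (g⁻¹ * h) g)).exists
  rw [mul_inv_cancel_left] at hgh
  exact (hg.trans (hgh b b)).trans hh.symm

end Family

lemma pairwise_injective_pow_mul_pow {G : Type*} [Group G] {p : ℕ} {t : Fin p → G}
    (hcomm : ∀ i j, Commute (t i) (t j))
    (hinj : Injective fun v : Fin p → ℤ => (List.ofFn fun i => t i ^ v i).prod) :
    Pairwise fun a b => Injective fun ij : ℕ × ℕ => t a ^ ij.1 * t b ^ ij.2 := by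
  have hc : Pairwise fun i j => ∀ x y : Multiplicative ℤ,
      Commute (zpowersHom G (t i) x) (zpowersHom G (t j) y) :=
    fun i j _ x y => (hcomm i j).zpow_zpow _ _
  set ψ := MonoidHom.noncommPiCoprod _ hc
  have hψ (v : Fin p → Multiplicative ℤ) : ψ v = (List.ofFn fun i => t i ^ (v i).toAdd).prod := by
    rw [MonoidHom.noncommPiCoprod_apply]
    simp only [Finset.noncommProd, Fin.univ_val_map, Multiset.noncommProd_coe]
    rfl
  have hψinj : Injective ψ := fun v w h => funext fun i =>
    congrFun (@hinj (fun i => (v i).toAdd) (fun i => (w i).toAdd)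
      ((hψ v).symm.trans (h.trans (hψ w)))) i
  intro a b hab ij kl h
  have key := @hψinj (Pi.mulSingle a (.ofAdd (ij.1 : ℤ)) * Pi.mulSingle b (.ofAdd (ij.2 : ℤ)))
    (Pi.mulSingle a (.ofAdd (kl.1 : ℤ)) * Pi.mulSingle b (.ofAdd (kl.2 : ℤ))) (by simpa [ψ] using h)
  exact Prod.ext (by simpa [hab] using congrFun key a) (by simpa [hab.symm] using congrFun key b)

theorem one_ended_of_mainHyp_general {α : Type*} [Finite α] [DecidableEq α]
    (rels : Set (FreeGroup α))
    (hmain : SatisfiesMainHyp rels)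
    (hocc : ∀ s : α, ∃ r ∈ rels, OccursIn s r) :
    (cayleyGraph (Set.range (PresentedGroup.of (rels := rels)))).end.Nonempty ∧
      (cayleyGraph (Set.range (PresentedGroup.of (rels := rels)))).end.Subsingleton := by
  obtain ⟨p, hp, t, hcomm, hinj, hrel⟩ := hmain
  set S := Set.range (PresentedGroup.of (rels := rels))
  have hS : Subgroup.closure S = ⊤ := PresentedGroup.closure_range_of rels
  have hSt : ∀ s ∈ S, ∃ a, Commute (t a) s := by
    rintro _ ⟨s, rfl⟩
    obtain ⟨r, hr, hsr⟩ := hocc s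
    obtain ⟨a, ha, -⟩ := hrel r hr
    exact ⟨a, ha s hsr⟩
  have : Nontrivial (Fin p) := Fin.nontrivial_iff_two_le.mpr (by omega)
  have : Infinite (PresentedGroup rels) := Infinite.of_injective _ hinj
  let _ : (cayleyGraph S).LocallyFinite := fun v =>
    (cayleyGraph_finite_neighborSet (Set.finite_range _) v).fintype
  have : Fact (cayleyGraph S).Preconnected := ⟨cayleyGraph_preconnected hS⟩
  refine ⟨end_nonempty _, end_subsingleton_of_reachableOutside _ fun K => ?_⟩
  obtain ⟨B, hB, hKB, hBmove⟩ := cayleyGraph_exists_finite_forall_reachableOutside_mul hS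
    ((Set.finite_range t).union (Set.finite_range (PresentedGroup.of (rels := rels))))
    K.finite_toSet
  exact exists_finite_forall_reachableOutside hS hKB hB (pairwise_injective_pow_mul_pow hcomm hinj)
    hcomm (fun y hy a => hBmove y hy _ (.inl ⟨a, rfl⟩)) hSt
    (fun y hy s hs => hBmove y hy s (.inr hs))

/-- If a finite presentation satisfies the hypotheses of the Main Theorem and every generator
occurs in some relation, then the group is one-ended: the Cayley graph with respect to the
image of the generating set has exactly one end. -/
theorem one_ended_of_mainHyp {α : Type*} [Finite α] [DecidableEq α]
    (rels : Set (FreeGroup α)) (hrels : rels.Finite)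
    (hmain : SatisfiesMainHyp rels)
    (hocc : ∀ s : α, ∃ r ∈ rels, OccursIn s r) :
    (cayleyGraph (Set.range (PresentedGroup.of (rels := rels)))).end.Nonempty ∧
      (cayleyGraph (Set.range (PresentedGroup.of (rels := rels)))).end.Subsingleton :=
  one_ended_of_mainHyp_general rels hmain hocc
end
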